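/- The set DesiredOne = {⟨A, E, X⟩ : A and E are Turing machines, X ⊆ H(E), A on input the encoding of the graph of E restricted to X outputs the code of some machine F, and E is input-output equivalent to F} is not recognizable; this follows by many-one reducing Same to DesiredOne via the map ⟨M₁, M₂⟩ ↦ ⟨A, M₁, ∅⟩ where A is the constant machine outputting the code of M₂. -/

import Mathlib

open Nat.Partrec

/-- Input-output equivalence of (codes of) Turing machines. -/
def IOEq (M₁ M₂ : Code) : Prop := M₁.eval = M₂.eval

/-- ⟨A, E, X⟩ ∈ DesiredOne iff the machine E halts on every point of the
finite set X (given as a list), and the learning machine A, on input the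
encoding of the graph of E restricted to X, outputs the code of a machine F
that is input-output equivalent to E. -/
def DesiredOne : Code × Code × List ℕ → Prop := fun p =>
  ∃ h : ∀ x ∈ p.2.2, ((p.2.1).eval x).Dom,
    ∃ F : Code,
      p.1.eval (Encodable.encode
          (p.2.2.attach.map fun x => (x.1, ((p.2.1).eval x.1).get (h x.1 x.2))))
        = Part.some (Encodable.encode F) ∧
      IOEq p.2.1 F

/-- A code whose eval is the everywhere-undefined function. -/
noncomputable def cnone : Code :=
  Classical.choose (Code.exists_code.1 (Nat.Partrec.none))

theorem cnone_eval : cnone.eval = fun _ => Part.none :=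
  Classical.choose_spec (Code.exists_code.1 (Nat.Partrec.none))

/-- The machine built from `c`: on any input, run `c` on `0` and output `0`. -/
def Mc (c : Code) : Code := Code.comp (Code.comp (Code.const 0) c) (Code.const 0)

theorem Mc_eval (c : Code) (x : ℕ) :
    (Mc c).eval x = (c.eval 0).bind fun _ => Part.some 0 := by
  simp only [Mc, Code.eval]
  rw [Code.eval_const]
  show (Part.some 0).bind (fun n => (c.eval n).bind (pure 0 : ℕ →. ℕ)) = (c.eval 0).bind fun _ => Part.some 0
  rw [Part.bind_some]
  exact congrArg _ (funext fun n => rfl)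

/-- The reduction. -/
noncomputable def red (c : Code) : Code × Code × List ℕ :=
  (Code.const (Encodable.encode cnone), Mc c, ([] : List ℕ))

theorem red_spec (c : Code) : DesiredOne (red c) ↔ ¬(c.eval 0).Dom := by
  constructor
  · rintro ⟨h, F, hA, hIO⟩ hdom
    have hF : F = cnone := by
      simp [red, Code.eval_const] at hA
      exact hA.symm
    rw [hF] at hIO
    have hIO' : (Mc c).eval = cnone.eval := hIO
    have hnone : ((c.eval 0).bind fun _ => Part.some 0) = Part.none := by
      have h0 := congrFun hIO' 0
      rw [Mc_eval] at h0
      rw [cnone_eval] at h0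
      exact h0
    have hd : ((c.eval 0).bind fun _ => Part.some 0).Dom := ⟨hdom, trivial⟩
    rw [hnone] at hd
    exact hd
  · intro hnd
    refine ⟨by simp [red], cnone, by simp [red, Code.eval_const], ?_⟩
    show (Mc c).eval = cnone.eval
    funext x
    rw [Mc_eval, cnone_eval]
    apply Part.eq_none_iff'.2
    rintro ⟨h, -⟩
    exact hnd h

theorem red_computable : Computable red := by
  refine Computable.pair (Computable.const _) (Computable.pair ?_ (Computable.const _))
  exact (Code.primrec₂_comp.comp
    (Code.primrec₂_comp.comp (Primrec.const (Code.const 0)) Primrec.id)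
    (Primrec.const (Code.const 0))).to_comp

theorem desiredOne_unrecognizable : ¬ REPred DesiredOne := by
  intro h
  apply ComputablePred.halting_problem_not_re 0
  have : REPred fun c => DesiredOne (red c) := (h.comp red_computable : _)
  exact this.of_eq red_spec
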